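/- Let G be a finite group, p a prime, and P₀ < P₁ < ⋯ < Pₙ₊₁ a chain of nontrivial p-subgroups with each Pᵢ normal in Pₙ₊₁. If Pₙ₊₁ is a Sylow p-subgroup of ⋂_{i=0}^{n+1} N_G(Pᵢ), then Pₙ₊₁ is a Sylow p-subgroup of ⋂_{i=0}^{n} N_G(Pᵢ). -/

import Mathlib

/-- `Q` is a Sylow `p`-subgroup of the subgroup `H`. -/
def IsSylowIn (p : ℕ) {G : Type*} [Group G] (Q H : Subgroup G) : Prop :=
  Q ≤ H ∧ Nat.card Q = p ^ (Nat.card H).factorization p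

/-!
Take a Sylow `p`-subgroup `Q` of `H = ⋂_{i ≤ n} N_G(Pᵢ)` containing `P = Pₙ₊₁`. If `P < Q`, then,
since `p`-groups satisfy the normalizer condition, `P < N_Q(P) ≤ H ∩ N_G(P) = ⋂_{i ≤ n+1} N_G(Pᵢ)`,
so `P` would not be a maximal `p`-subgroup of the full intersection.
-/

open Subgroup

theorem Fin.iInf_eq_iInf_castSucc_inf_last {α : Type*} [CompleteLattice α] {n : ℕ}
    (f : Fin (n + 1) → α) : ⨅ i, f i = (⨅ i : Fin n, f i.castSucc) ⊓ f (Fin.last n) :=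
  le_antisymm (le_inf (le_iInf fun _ => iInf_le _ _) (iInf_le _ _))
    (le_iInf fun i => Fin.lastCases inf_le_right (fun j => inf_le_left.trans (iInf_le _ j)) i)

theorem IsPGroup.lt_inf_normalizer_of_lt {G : Type*} [Group G] {p : ℕ} [Fact p.Prime]
    {P Q : Subgroup G} [Finite Q] (hQ : IsPGroup p Q) (hPQ : P < Q) :
    P < Q ⊓ normalizer (P : Set G) := by
  have hnc : NormalizerCondition Q := @Group.normalizerCondition_of_isNilpotent _ _ hQ.isNilpotent
  have hlt := hnc (P.subgroupOf Q) (lt_top_iff_ne_top.2 (mt subgroupOf_eq_top.1 hPQ.not_ge))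
  rw [← subgroupOf_normalizer_eq hPQ.le] at hlt
  have hmap := (map_lt_map_iff_of_injective Q.subtype_injective).2 hlt
  rwa [subgroupOf_map_subtype, subgroupOf_map_subtype, inf_of_le_left hPQ.le, inf_comm] at hmap

namespace IsSylowIn

variable {G : Type*} [Group G] {p : ℕ} {P Q H : Subgroup G}

theorem isPGroup (hP : IsSylowIn p P H) : IsPGroup p P :=
  IsPGroup.of_card hP.2

variable [Finite G] [Fact p.Prime]

theorem eq_of_le (hP : IsSylowIn p P H) (hQ : IsPGroup p Q) (hPQ : P ≤ Q) (hQH : Q ≤ H) :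
    P = Q := by
  obtain ⟨k, hk⟩ := IsPGroup.iff_card.mp hQ
  have hk_le : k ≤ (Nat.card H).factorization p :=
    (Nat.Prime.pow_dvd_iff_le_factorization Fact.out Nat.card_pos.ne').mp
      (hk ▸ card_dvd_of_le hQH)
  refine eq_of_le_of_card_ge hPQ ?_
  rw [hk, hP.2]
  exact Nat.pow_le_pow_right (Fact.out : p.Prime).pos hk_le

theorem _root_.IsPGroup.exists_isSylowIn_ge (hP : IsPGroup p P) (hPH : P ≤ H) :
    ∃ Q, P ≤ Q ∧ IsSylowIn p Q H := by
  obtain ⟨S, hS⟩ := (hP.comap_subtype (K := H)).exists_le_sylow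
  refine ⟨S.map H.subtype, ?_, map_subtype_le _, ?_⟩
  · rw [← inf_of_le_left hPH, ← subgroupOf_map_subtype]
    exact map_mono hS
  · rw [card_map_of_injective H.subtype_injective]
    exact S.card_eq_multiplicity

theorem of_inf_normalizer (hP : IsPGroup p P) (hPH : P ≤ H)
    (hSyl : IsSylowIn p P (H ⊓ normalizer (P : Set G))) : IsSylowIn p P H := by
  obtain ⟨Q, hPQ, hQ⟩ := hP.exists_isSylowIn_ge hPH
  obtain rfl | hlt := hPQ.eq_or_lt
  · exact hQ
  have hgrow := hQ.isPGroup.lt_inf_normalizer_of_lt hlt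
  exact absurd (hSyl.eq_of_le (hQ.isPGroup.to_le inf_le_left) hgrow.le
    (inf_le_inf_right _ hQ.1)) hgrow.ne

end IsSylowIn

theorem sylow_in_truncated_intersection_general
    {G : Type*} [Group G] [Finite G] {p : ℕ} [Fact p.Prime]
    {n : ℕ} (P : Fin (n + 2) → Subgroup G)
    (hpgrp : ∀ i, IsPGroup p (P i))
    (hnorm : ∀ i, P (Fin.last (n + 1)) ≤ Subgroup.normalizer (P i : Set G))
    (hSyl : IsSylowIn p (P (Fin.last (n + 1))) (⨅ i, Subgroup.normalizer (P i : Set G))) :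
    IsSylowIn p (P (Fin.last (n + 1)))
      (⨅ i : Fin (n + 1), Subgroup.normalizer (P i.castSucc : Set G)) := by
  rw [Fin.iInf_eq_iInf_castSucc_inf_last] at hSyl
  exact hSyl.of_inf_normalizer (hpgrp _) (le_iInf fun _ => hnorm _)

/-- If the top of a strict Robinson chain `P₀ < ⋯ < Pₙ₊₁` of nontrivial p-subgroups
is Sylow in the intersection of all normalizers, then it is Sylow in the
intersection of the normalizers of `P₀,…,Pₙ`. -/
theorem sylow_in_truncated_intersection
    {G : Type*} [Group G] [Finite G] {p : ℕ} [Fact p.Prime]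
    {n : ℕ} (P : Fin (n + 2) → Subgroup G)
    (hmono : StrictMono P)
    (hbot : ∀ i, P i ≠ ⊥)
    (hpgrp : ∀ i, IsPGroup p (P i))
    (hnorm : ∀ i, P (Fin.last (n + 1)) ≤ Subgroup.normalizer (P i : Set G))
    (hSyl : IsSylowIn p (P (Fin.last (n + 1))) (⨅ i, Subgroup.normalizer (P i : Set G))) :
    IsSylowIn p (P (Fin.last (n + 1)))
      (⨅ i : Fin (n + 1), Subgroup.normalizer (P i.castSucc : Set G)) :=
  sylow_in_truncated_intersection_general P hpgrp hnorm hSyl
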